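/- For all real numbers x and y, (x^{2/3} - y^{2/3})^2 - 2(x - y)(x^{1/3} - y^{1/3}) ≤ 0, where powers are defined via the real cube root. -/
import Mathlib

/-- Locally weak monotonicity estimate for σ(x)=x^{2/3}, b(x)=-x^{1/3}. -/
theorem cube_root_monotonicity (c : ℝ → ℝ) (hc : ∀ t : ℝ, (c t) ^ 3 = t) :
    ∀ x y : ℝ,
      ((c x) ^ 2 - (c y) ^ 2) ^ 2 - 2 * (x - y) * (c x - c y) ≤ 0 := by
  intro x y
  have hx := hc x
  have hy := hc y
  have key : ((c x) ^ 2 - (c y) ^ 2) ^ 2 - 2 * ((c x) ^ 3 - (c y) ^ 3) * (c x - c y)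
      = -((c x - c y) ^ 2 * ((c x) ^ 2 + (c y) ^ 2)) := by ring
  have hnn : 0 ≤ (c x - c y) ^ 2 * ((c x) ^ 2 + (c y) ^ 2) :=
    mul_nonneg (sq_nonneg _) (by positivity)
  calc ((c x) ^ 2 - (c y) ^ 2) ^ 2 - 2 * (x - y) * (c x - c y)
      = ((c x) ^ 2 - (c y) ^ 2) ^ 2 - 2 * ((c x) ^ 3 - (c y) ^ 3) * (c x - c y) := by
        rw [hx, hy]
    _ = -((c x - c y) ^ 2 * ((c x) ^ 2 + (c y) ^ 2)) := key
    _ ≤ 0 := by linarith
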